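/- The SBBA mechanism is dominant-strategy truthful in expectation for sellers: for every seller with true cost c and every profile of other agents' reports, the seller's expected utility (p - c times her trading probability) when asking c is at least her expected utility when asking any other value a. -/
import Mathlib


open scoped Classical

/-! Formalization of the SBBA mechanism on raw bid profiles.
Sellers' asks `A` are sorted ascending and buyers' bids `B` descending using
`Tuple.sort` (which also provides a fixed tie-breaking order).  Ranks are 0-based:
the number of efficient deals `numDeals` is the largest `K` with
`sortedAsks (K-1) ≤ sortedBids (K-1)`; "`s (k+1)`" is `sortedAsks K` and
"`b k`" is `sortedBids (K-1)`. -/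

/-- The `i`-th lowest ask (0-based); arbitrary value `0` beyond the range. -/
noncomputable def sortedAsks {n : ℕ} (A : Fin n → ℝ) : ℕ → ℝ := fun i =>
  if h : i < n then A (Tuple.sort A ⟨i, h⟩) else 0

/-- The `i`-th highest bid (0-based); arbitrary value `0` beyond the range. -/
noncomputable def sortedBids {n : ℕ} (B : Fin n → ℝ) : ℕ → ℝ := fun i =>
  if h : i < n then B (Tuple.sort (fun j => -B j) ⟨i, h⟩) else 0

/-- `K`, the number of efficient deals: the number of positions where the sorted
ask is at most the sorted bid. -/
noncomputable def numDeals {n : ℕ} (A B : Fin n → ℝ) : ℕ :=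
  ((Finset.range n).filter fun i => sortedAsks A i ≤ sortedBids B i).card

/-- 0-based rank of seller `j` in the ascending order of asks. -/
noncomputable def sellerRank {n : ℕ} (A : Fin n → ℝ) (j : Fin n) : ℕ :=
  ((Tuple.sort A).symm j : ℕ)

/-- 0-based rank of buyer `j` in the descending order of bids. -/
noncomputable def buyerRank {n : ℕ} (B : Fin n → ℝ) (j : Fin n) : ℕ :=
  ((Tuple.sort (fun i => -B i)).symm j : ℕ)

/-- Case 1 of SBBA: `s (k+1) ≤ b k` (in particular `k ≥ 1` and `k < n`). -/
def caseOne {n : ℕ} (A B : Fin n → ℝ) : Prop :=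
  1 ≤ numDeals A B ∧ numDeals A B < n ∧
    sortedAsks A (numDeals A B) ≤ sortedBids B (numDeals A B - 1)

/-- The single SBBA trading price `min (s (k+1)) (b k)`:
`s (k+1)` in case 1, `b k` in case 2. -/
noncomputable def price {n : ℕ} (A B : Fin n → ℝ) : ℝ :=
  if caseOne A B then sortedAsks A (numDeals A B) else sortedBids B (numDeals A B - 1)

/-- Buyer `j` wins (trades with probability 1): in case 1 the first `K` buyers win,
in case 2 the first `K - 1` buyers win. -/
noncomputable def buyerWins {n : ℕ} (A B : Fin n → ℝ) (j : Fin n) : Prop :=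
  if caseOne A B then buyerRank B j < numDeals A B
  else buyerRank B j + 1 < numDeals A B

/-- Seller `j`'s probability of trading: `1` for the first `K` sellers in case 1,
`1 - 1/K` for them in case 2 (one of them, uniformly random, is excluded),
and `0` for all other sellers. -/
noncomputable def sellerProb {n : ℕ} (A B : Fin n → ℝ) (j : Fin n) : ℝ :=
  if sellerRank A j < numDeals A B then
    (if caseOne A B then 1 else 1 - 1 / (numDeals A B : ℝ))
  else 0

lemma sortedAsks_mono {n : ℕ} (A : Fin n → ℝ) {i i' : ℕ} (h : i ≤ i') (h' : i' < n) :
    sortedAsks A i ≤ sortedAsks A i' := by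
  have hi : i < n := lt_of_le_of_lt h h'
  unfold sortedAsks
  rw [dif_pos hi, dif_pos h']
  exact Tuple.monotone_sort A (show (⟨i, hi⟩ : Fin n) ≤ ⟨i', h'⟩ from h)

lemma sortedBids_anti {n : ℕ} (B : Fin n → ℝ) {i i' : ℕ} (h : i ≤ i') (h' : i' < n) :
    sortedBids B i' ≤ sortedBids B i := by
  have hi : i < n := lt_of_le_of_lt h h'
  unfold sortedBids
  rw [dif_pos hi, dif_pos h']
  have := Tuple.monotone_sort (fun j => -B j)
    (show (⟨i, hi⟩ : Fin n) ≤ ⟨i', h'⟩ from h)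
  simpa using this

lemma prefix_filter_card {n : ℕ} (P : ℕ → Prop) [DecidablePred P]
    (hdc : ∀ i i', i ≤ i' → i' < n → P i' → P i) {i : ℕ} (hi : i < n) :
    i < ((Finset.range n).filter P).card ↔ P i := by
  constructor
  · intro h
    by_contra hP
    have hsub : (Finset.range n).filter P ⊆ Finset.range i := by
      intro m hm
      simp only [Finset.mem_filter, Finset.mem_range] at hm
      rw [Finset.mem_range]
      by_contra hmi
      exact hP (hdc i m (le_of_not_gt hmi) hm.1 hm.2)
    have := Finset.card_le_card hsub
    rw [Finset.card_range] at this
    omega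
  · intro hP
    have hsub : Finset.range (i + 1) ⊆ (Finset.range n).filter P := by
      intro m hm
      rw [Finset.mem_range] at hm
      simp only [Finset.mem_filter, Finset.mem_range]
      exact ⟨by omega, hdc m i (by omega) hi hP⟩
    have := Finset.card_le_card hsub
    rw [Finset.card_range] at this
    omega

noncomputable def askCnt {n : ℕ} (A : Fin n → ℝ) (t : ℝ) : ℕ :=
  (Finset.univ.filter fun k => A k ≤ t).card

lemma askCnt_eq {n : ℕ} (A : Fin n → ℝ) (t : ℝ) :
    askCnt A t = ((Finset.range n).filter fun m => sortedAsks A m ≤ t).card := by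
  unfold askCnt
  apply Finset.card_bij (fun k _ => ((Tuple.sort A).symm k : ℕ))
  · intro k hk
    simp only [Finset.mem_filter, Finset.mem_univ, true_and] at hk
    simp only [Finset.mem_filter, Finset.mem_range]
    refine ⟨((Tuple.sort A).symm k).isLt, ?_⟩
    unfold sortedAsks
    rw [dif_pos ((Tuple.sort A).symm k).isLt]
    rw [Fin.eta, Equiv.apply_symm_apply]
    exact hk
  · intro k₁ h₁ k₂ h₂ h
    have : (Tuple.sort A).symm k₁ = (Tuple.sort A).symm k₂ := Fin.val_injective h
    exact (Tuple.sort A).symm.injective this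
  · intro m hm
    simp only [Finset.mem_filter, Finset.mem_range] at hm
    refine ⟨Tuple.sort A ⟨m, hm.1⟩, ?_, ?_⟩
    · simp only [Finset.mem_filter, Finset.mem_univ, true_and]
      have := hm.2
      unfold sortedAsks at this
      rwa [dif_pos hm.1] at this
    · rw [Equiv.symm_apply_apply]

lemma sortedAsks_le_iff {n : ℕ} (A : Fin n → ℝ) {i : ℕ} (hi : i < n) (t : ℝ) :
    sortedAsks A i ≤ t ↔ i < askCnt A t := by
  rw [askCnt_eq]
  exact (prefix_filter_card _
    (fun i i' h h' hP => le_trans (sortedAsks_mono A h h') hP) hi).symm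

lemma numDeals_le {n : ℕ} (A B : Fin n → ℝ) : numDeals A B ≤ n :=
  le_trans (Finset.card_filter_le _ _) (le_of_eq (Finset.card_range n))

lemma lt_numDeals_iff {n : ℕ} (A B : Fin n → ℝ) {i : ℕ} (hi : i < n) :
    i < numDeals A B ↔ sortedAsks A i ≤ sortedBids B i :=
  prefix_filter_card _
    (fun i i' h h' hP =>
      le_trans (sortedAsks_mono A h h') (le_trans hP (sortedBids_anti B h h'))) hi

lemma sellerRank_lt {n : ℕ} (A : Fin n → ℝ) (j : Fin n) : sellerRank A j < n :=
  ((Tuple.sort A).symm j).isLt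

lemma sortedAsks_sellerRank {n : ℕ} (A : Fin n → ℝ) (j : Fin n) :
    sortedAsks A (sellerRank A j) = A j := by
  unfold sortedAsks sellerRank
  rw [dif_pos ((Tuple.sort A).symm j).isLt, Fin.eta, Equiv.apply_symm_apply]

lemma askCnt_update {n : ℕ} (A : Fin n → ℝ) (j : Fin n) (x t : ℝ) :
    askCnt (Function.update A j x) t
      = (if x ≤ t then 1 else 0) + ((Finset.univ.erase j).filter fun k => A k ≤ t).card := by
  unfold askCnt
  rw [Finset.card_filter, Finset.card_filter,
    ← Finset.add_sum_erase _ _ (Finset.mem_univ j)]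
  congr 1
  · simp
  · apply Finset.sum_congr rfl
    intro k hk
    rw [Function.update_of_ne (Finset.ne_of_mem_erase hk)]

lemma askCnt_update_le {n : ℕ} (A : Fin n → ℝ) (j : Fin n) (x y t : ℝ) :
    askCnt (Function.update A j x) t ≤ askCnt (Function.update A j y) t + 1 := by
  rw [askCnt_update, askCnt_update]
  split_ifs <;> omega

lemma askCnt_update_le_of_le {n : ℕ} (A : Fin n → ℝ) (j : Fin n) {x : ℝ} (y : ℝ) {t : ℝ}
    (hx : x ≤ t) :
    askCnt (Function.update A j y) t ≤ askCnt (Function.update A j x) t := by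
  rw [askCnt_update, askCnt_update, if_pos hx]
  split_ifs <;> omega

lemma numDeals_le_of_wins {n : ℕ} (A B : Fin n → ℝ) (j : Fin n) (x y : ℝ)
    (hy : sellerRank (Function.update A j y) j < numDeals (Function.update A j y) B) :
    numDeals (Function.update A j x) B ≤ numDeals (Function.update A j y) B := by
  set Ax := Function.update A j x with hAx
  set Ay := Function.update A j y with hAy
  by_contra hcon
  push_neg at hcon
  set K' := numDeals Ay B with hK'
  have hK'n : K' < n := lt_of_lt_of_le hcon (numDeals_le Ax B)
  have h1 : sortedAsks Ax K' ≤ sortedBids B K' := (lt_numDeals_iff Ax B hK'n).mp hcon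
  have h2 : ¬ sortedAsks Ay K' ≤ sortedBids B K' := by
    intro hc
    exact lt_irrefl K' ((lt_numDeals_iff Ay B hK'n).mpr hc)
  set t := sortedAsks Ax K' with ht
  have ht1 : K' < askCnt Ax t := (sortedAsks_le_iff Ax hK'n t).mp le_rfl
  have ht2 : askCnt Ay t ≤ K' := by
    by_contra hcc
    push_neg at hcc
    exact h2 (le_trans ((sortedAsks_le_iff Ay hK'n t).mpr hcc) h1)
  have hle : askCnt Ax t ≤ askCnt Ay t + 1 := askCnt_update_le A j x y t
  have hEx : askCnt Ax t = K' + 1 := by omega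
  have hEy : askCnt Ay t = K' := by omega
  have hyt : ¬ y ≤ t := by
    intro hyt
    have h := askCnt_update_le_of_le A j (y := x) hyt
    rw [← hAx, ← hAy] at h
    omega
  have hAyj : Ay j = y := by rw [hAy]; exact Function.update_self j y A
  have hiff := sortedAsks_le_iff Ay (sellerRank_lt Ay j) t
  rw [sortedAsks_sellerRank Ay j, hAyj] at hiff
  exact hyt (hiff.mpr (by omega))

/-- If both asks win with the same number of deals `K < n`, the `K`-th sorted ask
is the same. -/

lemma sortedAsks_numDeals_le {n : ℕ} (A B : Fin n → ℝ) (j : Fin n) (x y : ℝ)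
    (hx : sellerRank (Function.update A j x) j < numDeals (Function.update A j x) B)
    (heq : numDeals (Function.update A j x) B = numDeals (Function.update A j y) B)
    (hn : numDeals (Function.update A j y) B < n) :
    sortedAsks (Function.update A j x) (numDeals (Function.update A j y) B)
      ≤ sortedAsks (Function.update A j y) (numDeals (Function.update A j y) B) := by
  set Ax := Function.update A j x with hAx
  set Ay := Function.update A j y with hAy
  set K := numDeals Ay B with hK
  by_contra hcon
  push_neg at hcon
  set t := sortedAsks Ay K with ht
  have ht1 : K < askCnt Ay t := (sortedAsks_le_iff Ay hn t).mp le_rfl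
  have ht2 : askCnt Ax t ≤ K := by
    by_contra hcc
    push_neg at hcc
    exact absurd ((sortedAsks_le_iff Ax hn t).mpr hcc) (not_le.mpr hcon)
  have hle : askCnt Ay t ≤ askCnt Ax t + 1 := askCnt_update_le A j y x t
  have hEy : askCnt Ay t = K + 1 := by omega
  have hEx : askCnt Ax t = K := by omega
  have hxt : ¬ x ≤ t := by
    intro hxt
    have h := askCnt_update_le_of_le A j (y := y) hxt
    rw [← hAx, ← hAy] at h
    omega
  have hAxj : Ax j = x := by rw [hAx]; exact Function.update_self j x A
  have hiff := sortedAsks_le_iff Ax (sellerRank_lt Ax j) t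
  rw [sortedAsks_sellerRank Ax j, hAxj] at hiff
  have hrx : sellerRank Ax j < K := heq ▸ hx
  exact hxt (hiff.mpr (by omega))

lemma sellerProb_nonneg {n : ℕ} (A B : Fin n → ℝ) (j : Fin n) : 0 ≤ sellerProb A B j := by
  unfold sellerProb
  split_ifs with h1 h2
  · norm_num
  · have h3 : 1 ≤ numDeals A B := by omega
    have h4 : (1 : ℝ) ≤ (numDeals A B : ℝ) := by exact_mod_cast h3
    have h5 : 1 / (numDeals A B : ℝ) ≤ 1 := by
      rw [div_le_one (by linarith)]
      exact h4
    linarith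
  · exact le_refl 0

lemma price_ge_of_wins {n : ℕ} (A B : Fin n → ℝ) (j : Fin n)
    (hw : sellerRank A j < numDeals A B) : A j ≤ price A B := by
  have hK1 : 1 ≤ numDeals A B := by omega
  have hKn : numDeals A B ≤ n := numDeals_le A B
  have hrn : sellerRank A j < n := sellerRank_lt A j
  have hAj : A j = sortedAsks A (sellerRank A j) := (sortedAsks_sellerRank A j).symm
  unfold price
  split_ifs with hc1
  · rw [hAj]
    exact sortedAsks_mono A (le_of_lt hw) hc1.2.1
  · have h1 : sortedAsks A (sellerRank A j) ≤ sortedAsks A (numDeals A B - 1) :=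
      sortedAsks_mono A (by omega) (by omega)
    have h2 : sortedAsks A (numDeals A B - 1) ≤ sortedBids B (numDeals A B - 1) :=
      (lt_numDeals_iff A B (by omega)).mp (by omega)
    linarith [hAj ▸ (le_trans h1 h2)]

lemma seller_wins_transfer {n : ℕ} (A B : Fin n → ℝ) (j : Fin n) (a c : ℝ)
    (hwa : sellerRank (Function.update A j a) j < numDeals (Function.update A j a) B)
    (hp : a < c → c < price (Function.update A j a) B) :
    sellerRank (Function.update A j c) j < numDeals (Function.update A j c) B := by
  set Ax := Function.update A j a with hAx
  set Ac := Function.update A j c with hAc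
  set Ka := numDeals Ax B with hKa
  set rc := sellerRank Ac j with hrc
  have hKa1 : 1 ≤ Ka := by omega
  have hKan : Ka ≤ n := numDeals_le Ax B
  have hrcn : rc < n := sellerRank_lt Ac j
  have hran : sellerRank Ax j < n := sellerRank_lt Ax j
  have hKa1n : Ka - 1 < n := by omega
  have hAxj : Ax j = a := by rw [hAx]; exact Function.update_self j a A
  have hAcj : Ac j = c := by rw [hAc]; exact Function.update_self j c A
  have hsa : sortedAsks Ax (sellerRank Ax j) = a := by
    rw [sortedAsks_sellerRank Ax j, hAxj]
  have hsc : sortedAsks Ac rc = c := by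
    rw [hrc, sortedAsks_sellerRank Ac j, hAcj]
  -- `c` is at most the `Ka-1`-th sorted bid
  have hcb : c ≤ sortedBids B (Ka - 1) := by
    rcases le_or_gt c a with hca | hac
    · have h1 : a ≤ sortedAsks Ax (Ka - 1) :=
        hsa ▸ sortedAsks_mono Ax (show sellerRank Ax j ≤ Ka - 1 by omega) hKa1n
      have h2 : sortedAsks Ax (Ka - 1) ≤ sortedBids B (Ka - 1) :=
        (lt_numDeals_iff Ax B hKa1n).mp (by omega)
      linarith
    · have hp' := hp hac
      unfold price at hp'
      split_ifs at hp' with hc1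
      · linarith [hc1.2.2]
      · linarith
  -- the rank of `c` is below `Ka`
  have hrcKa : rc < Ka := by
    rcases le_or_gt c a with hca | hac
    · by_contra hge
      push_neg at hge
      have h1 : rc < askCnt Ac c := (sortedAsks_le_iff Ac hrcn c).mp (le_of_eq hsc)
      have h2 : askCnt Ac c ≤ askCnt Ax c + 1 := by
        have h := askCnt_update_le A j c a c
        rw [← hAx, ← hAc] at h
        exact h
      have h3 : Ka - 1 < askCnt Ax c := by omega
      have h4 : sortedAsks Ax (Ka - 1) ≤ c := (sortedAsks_le_iff Ax hKa1n c).mpr h3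
      have h5 : a ≤ sortedAsks Ax (Ka - 1) :=
        hsa ▸ sortedAsks_mono Ax (show sellerRank Ax j ≤ Ka - 1 by omega) hKa1n
      have hac' : a = c := le_antisymm (le_trans h5 h4) hca
      have hAeq : Ax = Ac := by rw [hAx, hAc, hac']
      have e1 : sellerRank Ax j = rc := by rw [hAeq]
      have e2 : Ka = numDeals Ac B := by rw [hKa, hAeq]
      omega
    · rcases eq_or_lt_of_le hKan with hKn | hKn
      · omega
      · have hcA : c < sortedAsks Ax Ka := by
          have hp'' := hp hac
          unfold price at hp''
          split_ifs at hp'' with hc1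
          · exact hp''
          · have h6 : ¬ sortedAsks Ax Ka ≤ sortedBids B (Ka - 1) := fun hth =>
              hc1 ⟨hKa1, hKn, hth⟩
            push_neg at h6
            linarith
        have h1 : askCnt Ax c ≤ Ka := by
          by_contra hcc
          push_neg at hcc
          exact absurd ((sortedAsks_le_iff Ax hKn c).mpr hcc) (not_le.mpr hcA)
        have h2 : askCnt Ac c ≤ askCnt Ax c := by
          have h := askCnt_update_le_of_le A j (x := a) (y := c) (t := c) (le_of_lt hac)
          rw [← hAx, ← hAc] at h
          exact h
        have h3 : rc < askCnt Ac c := (sortedAsks_le_iff Ac hrcn c).mp (le_of_eq hsc)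
        omega
  -- conclude
  refine (lt_numDeals_iff Ac B hrcn).mpr ?_
  rw [hsc]
  exact le_trans hcb (sortedBids_anti B (by omega) hKa1n)

/-- SBBA is dominant-strategy truthful in expectation for sellers: for every seller
`j` with true cost `c` and every profile of the other agents' reports, the expected
utility (trading probability times `p - c`) of asking the true cost `c` is at least
that of any other ask `a`. -/
theorem sbba_seller_truthful {n : ℕ} (A B : Fin n → ℝ) (j : Fin n) (c a : ℝ) :
    sellerProb (Function.update A j a) B j * (price (Function.update A j a) B - c) ≤
    sellerProb (Function.update A j c) B j * (price (Function.update A j c) B - c) := by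
  set Ax := Function.update A j a with hAx
  set Ac := Function.update A j c with hAc
  by_cases hwa : sellerRank Ax j < numDeals Ax B
  · by_cases hwc : sellerRank Ac j < numDeals Ac B
    · -- both win: outcomes coincide
      have hK : numDeals Ax B = numDeals Ac B := by
        have h1 := numDeals_le_of_wins A B j a c (by rw [← hAc]; exact hwc)
        have h2 := numDeals_le_of_wins A B j c a (by rw [← hAx]; exact hwa)
        rw [← hAx, ← hAc] at h1 h2
        omega
      have hsAeq : numDeals Ac B < n → sortedAsks Ax (numDeals Ac B) = sortedAsks Ac (numDeals Ac B) := by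
        intro hn
        have h1 := sortedAsks_numDeals_le A B j a c (by rw [← hAx]; exact hwa)
          (by rw [← hAx, ← hAc]; exact hK) (by rw [← hAc]; exact hn)
        have h2 := sortedAsks_numDeals_le A B j c a (by rw [← hAc]; exact hwc)
          (by rw [← hAx, ← hAc]; exact hK.symm) (by rw [← hAx]; exact hK ▸ hn)
        rw [← hAx, ← hAc] at h1 h2
        rw [hK] at h2
        exact le_antisymm h1 h2
      have hsAeq' : numDeals Ax B < n →
          sortedAsks Ax (numDeals Ax B) = sortedAsks Ac (numDeals Ax B) := by
        intro hn
        rw [hK]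
        exact hsAeq (hK ▸ hn)
      have hco : caseOne Ax B ↔ caseOne Ac B := by
        unfold caseOne
        constructor
        · rintro ⟨h1, h2, h3⟩
          refine ⟨hK ▸ h1, hK ▸ h2, ?_⟩
          rw [← hK, ← hsAeq' h2]
          exact h3
        · rintro ⟨h1, h2, h3⟩
          refine ⟨hK.symm ▸ h1, hK.symm ▸ h2, ?_⟩
          have h2' : numDeals Ax B < n := hK.symm ▸ h2
          rw [hsAeq' h2', hK]
          exact h3
      have hprice : price Ax B = price Ac B := by
        unfold price
        by_cases hc1 : caseOne Ax B
        · rw [if_pos hc1, if_pos (hco.mp hc1), ← hK, hsAeq' hc1.2.1]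
        · rw [if_neg hc1, if_neg (fun h => hc1 (hco.mpr h)), hK]
      have hprob : sellerProb Ax B j = sellerProb Ac B j := by
        unfold sellerProb
        rw [if_pos hwa, if_pos hwc]
        by_cases hc1 : caseOne Ax B
        · rw [if_pos hc1, if_pos (hco.mp hc1)]
        · rw [if_neg hc1, if_neg (fun h => hc1 (hco.mpr h)), hK]
      rw [hprice, hprob]
    · -- a wins, c loses
      have hr : sellerProb Ac B j = 0 := by unfold sellerProb; rw [if_neg hwc]
      have hple : price Ax B ≤ c := by
        by_contra hgt
        push_neg at hgt
        have := seller_wins_transfer A B j a c (by rw [← hAx]; exact hwa)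
          (fun _ => by rw [← hAx]; exact hgt)
        rw [← hAc] at this
        exact hwc this
      rw [hr, zero_mul]
      exact mul_nonpos_of_nonneg_of_nonpos (sellerProb_nonneg Ax B j) (by linarith)
  · -- a loses
    have hl : sellerProb Ax B j = 0 := by unfold sellerProb; rw [if_neg hwa]
    rw [hl, zero_mul]
    by_cases hwc : sellerRank Ac j < numDeals Ac B
    · have h1 : c ≤ price Ac B := by
        have := price_ge_of_wins Ac B j hwc
        rwa [show Ac j = c from by rw [hAc]; exact Function.update_self j c A] at this
      exact mul_nonneg (sellerProb_nonneg Ac B j) (by linarith)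
    · have hr : sellerProb Ac B j = 0 := by unfold sellerProb; rw [if_neg hwc]
      rw [hr, zero_mul]
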